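/- arXiv:2111.05676 — 13 statements merged into one kernel-verified Lean document; each statement's English description precedes it below -/
import Mathlib

section
/- Every σ-complete S4^C_I-algebra is standard: if d and a sequence (a_j)_{j∈ℕ} of elements satisfy a_j ≤ E d ∧ E a_{j+1} for all j, then a_0 ≤ C d. -/
/-- An `S4CStruct` packages the box operators and the common-knowledge operator. -/
structure S4CStruct (I : Type*) (A : Type*) [Fintype I] [BooleanAlgebra A] where
  box : I → A → A
  C : A → A

namespace S4CStruct

variable {I A : Type*} [Fintype I] [BooleanAlgebra A]

/-- `E a = ⋀ i, □_i a`. -/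
def E (S : S4CStruct I A) (a : A) : A := Finset.univ.inf fun i => S.box i a

/-- The axioms of an `S4^C_I`-algebra. -/
structure IsS4C (S : S4CStruct I A) : Prop where
  box_top : ∀ i, S.box i ⊤ = ⊤
  box_inf : ∀ i a b, S.box i (a ⊓ b) = S.box i a ⊓ S.box i b
  box_idem : ∀ i a, S.box i (S.box i a) = S.box i a
  box_le : ∀ i a, S.box i a ≤ a
  C_top : S.C ⊤ = ⊤
  C_inf : ∀ a b, S.C (a ⊓ b) = S.C a ⊓ S.C b
  C_idem : ∀ a, S.C (S.C a) = S.C a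
  C_le : ∀ a, S.C a ≤ a
  fix : ∀ a, S.C a ≤ S.E a ⊓ S.E (S.C a)
  ind : ∀ a, S.E a ⊓ S.C (a ⇨ S.E a) ≤ S.C a

/-- A standard `S4^C_I`-algebra. -/
def Standard (S : S4CStruct I A) : Prop :=
  ∀ (d : A) (a : ℕ → A), (∀ j, a j ≤ S.E d ⊓ S.E (a (j + 1))) → a 0 ≤ S.C d

/-- The relation `a ≺_d b  ↔  b ≤ E d ⊓ E a`. -/
def prec (S : S4CStruct I A) (d : A) (a b : A) : Prop := b ≤ S.E d ⊓ S.E a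

end S4CStruct

theorem sigmaComplete_standard {I A : Type*} [Fintype I] [Nonempty I] [BooleanAlgebra A]
    (S : S4CStruct I A) (hS : S.IsS4C)
    (hσ : ∀ s : Set A, s.Countable → ∃ b, IsLUB s b) :
    S.Standard := by
  intro d a ha
  obtain ⟨b, hb⟩ := hσ (Set.range a) (Set.countable_range a)
  have hub : ∀ j, a j ≤ b := fun j => hb.1 ⟨j, rfl⟩
  have boxmono : ∀ i, Monotone (S.box i) := by
    intro i x y hxy
    have h := hS.box_inf i x y
    rw [inf_eq_left.2 hxy] at h
    rw [h]; exact inf_le_right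
  have Emono : Monotone S.E := fun x y hxy =>
    Finset.inf_mono_fun fun i _ => boxmono i hxy
  have Einf : ∀ x y : A, S.E (x ⊓ y) = S.E x ⊓ S.E y := by
    intro x y
    apply le_antisymm
    · exact le_inf (Emono inf_le_left) (Emono inf_le_right)
    · apply Finset.le_inf
      intro i _
      rw [hS.box_inf]
      exact inf_le_inf (Finset.inf_le (Finset.mem_univ i))
        (Finset.inf_le (Finset.mem_univ i))
  have Cmono : ∀ x y : A, x ≤ y → S.C x ≤ S.C y := by
    intro x y hxy
    have h := hS.C_inf x y
    rw [inf_eq_left.2 hxy] at h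
    rw [h]; exact inf_le_right
  have coind : ∀ x : A, x ≤ S.E (d ⊓ x) → x ≤ S.C d := by
    intro x hx
    have h1 : (d ⊓ x) ⇨ S.E (d ⊓ x) = ⊤ := by
      rw [eq_top_iff, le_himp_iff, top_inf_eq]
      exact le_trans inf_le_right hx
    have h2 := hS.ind (d ⊓ x)
    rw [h1, hS.C_top, inf_top_eq] at h2
    exact le_trans hx (le_trans h2 (Cmono _ _ inf_le_left))
  have hbE : b ≤ S.E (d ⊓ b) := by
    apply hb.2
    rintro _ ⟨j, rfl⟩
    rw [Einf]
    exact le_inf (le_trans (ha j) inf_le_left)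
      (le_trans (le_trans (ha j) inf_le_right) (Emono (hub (j + 1))))
  exact le_trans (hub 0) (coind b hbE)
end

section
/- In any S4^C_I-algebra, for every element a, the element C a is the greatest fixed point of the map z ↦ E a ∧ E z; that is, C a = E a ∧ E (C a), and whenever z ≤ E a ∧ E z then z ≤ C a. -/
lemma S4CStruct.E_le {I A : Type*} [Fintype I] [Nonempty I] [BooleanAlgebra A]
    (S : S4CStruct I A) (hS : S.IsS4C) (a : A) : S.E a ≤ a := by
  obtain ⟨i⟩ := ‹Nonempty I›
  exact le_trans (Finset.inf_le (Finset.mem_univ i)) (hS.box_le i a)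

lemma S4CStruct.E_inf {I A : Type*} [Fintype I] [BooleanAlgebra A]
    (S : S4CStruct I A) (hS : S.IsS4C) (a b : A) : S.E (a ⊓ b) = S.E a ⊓ S.E b := by
  unfold S4CStruct.E
  simp only [hS.box_inf]
  exact le_antisymm (le_inf (Finset.inf_mono_fun fun i _ => inf_le_left) (Finset.inf_mono_fun fun i _ => inf_le_right)) (Finset.le_inf fun i hi => le_inf (le_trans inf_le_left (Finset.inf_le hi)) (le_trans inf_le_right (Finset.inf_le hi)))

theorem C_greatest_fixed_point {I A : Type*} [Fintype I] [Nonempty I] [BooleanAlgebra A]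
    (S : S4CStruct I A) (hS : S.IsS4C) (a : A) :
    S.C a = S.E a ⊓ S.E (S.C a) ∧ ∀ z : A, z ≤ S.E a ⊓ S.E z → z ≤ S.C a := by
  constructor
  · refine le_antisymm (hS.fix a) ?_
    exact le_trans inf_le_right (le_trans (S.E_le hS _) (le_refl _))
  · intro z hz
    set w := a ⊓ z with hw
    have hEw : S.E a ⊓ S.E z = S.E w := (S.E_inf hS a z).symm
    have hzEw : z ≤ S.E w := hEw ▸ hz
    have hwEw : w ≤ S.E w := le_trans inf_le_right hzEw
    have himp : (w ⇨ S.E w) = ⊤ := by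
      rw [himp_eq_top_iff]
      exact hwEw
    have := hS.ind w
    rw [himp, hS.C_top, inf_top_eq] at this
    have hCw : z ≤ S.C w := le_trans hzEw this
    have : S.C w ≤ S.C a := by
      have := hS.C_inf a z
      rw [← hw] at this
      rw [this]
      exact inf_le_left
    exact le_trans hCw this
end

section
/- Given a family of topologies (τ_i)_{i∈I} on a set X with I finite and nonempty, the powerset Boolean algebra of X equipped with the interior operators Int_{τ_i} for i ∈ I and Int_τ for τ = ⋂_{i∈I} τ_i is an S4^C_I-algebra; in particular Int_τ(Y) ⊆ ⋂_{i∈I} Int_{τ_i}(Y) ∩ ⋂_{i∈I} Int_{τ_i}(Int_τ(Y)) and ⋂_{i∈I} Int_{τ_i}(Y) ∩ Int_τ((X\Y) ∪ ⋂_{i∈I} Int_{τ_i}(Y)) ⊆ Int_τ(Y) for all Y ⊆ X. -/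
/-- The intersection of a family of topologies (as families of open sets). -/
def interTop {X I : Type*} (τ : I → TopologicalSpace X) : TopologicalSpace X where
  IsOpen s := ∀ i, (τ i).IsOpen s
  isOpen_univ := fun i => @isOpen_univ _ (τ i)
  isOpen_inter := fun s t hs ht i => @IsOpen.inter _ (τ i) s t (hs i) (ht i)
  isOpen_sUnion := fun _ hF i => @isOpen_sUnion _ (τ i) _ (fun t htF => hF t htF i)

/-- Interior operator of an explicitly given topology. -/
def topInt {X : Type*} (t : TopologicalSpace X) (Y : Set X) : Set X := @interior X t Y



section Wrap

variable {X : Type*} (t : TopologicalSpace X)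

lemma myIntSubset (s : Set X) : topInt t s ⊆ s := by
  letI := t; exact interior_subset

lemma myIsOpenInt (s : Set X) : t.IsOpen (topInt t s) := by
  letI := t; exact isOpen_interior

lemma myIntMaximal {s u : Set X} (h1 : u ⊆ s) (h2 : t.IsOpen u) : u ⊆ topInt t s := by
  letI := t; exact interior_maximal h1 h2

lemma myIntUniv : topInt t (Set.univ : Set X) = Set.univ := by
  letI := t; exact interior_univ

lemma myIntInter (s u : Set X) : topInt t (s ∩ u) = topInt t s ∩ topInt t u := by
  letI := t; exact interior_inter

lemma myIntIdem (s : Set X) : topInt t (topInt t s) = topInt t s := by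
  letI := t; exact interior_interior

lemma myIsOpenInter {s u : Set X} (h1 : t.IsOpen s) (h2 : t.IsOpen u) : t.IsOpen (s ∩ u) := by
  letI := t; exact IsOpen.inter (s := s) (t := u) h1 h2

end Wrap

section Aux

variable {I X : Type*} [Fintype I] (τ : I → TopologicalSpace X)

lemma finset_inf_eq_iInter (f : I → Set X) : Finset.univ.inf f = ⋂ i, f i := by
  ext x; simp [Finset.inf_set_eq_iInter]

lemma interTop_mono (i : I) (Y : Set X) :
    topInt (interTop τ) Y ⊆ topInt (τ i) Y :=
  myIntMaximal (τ i) (myIntSubset (interTop τ) Y) ((myIsOpenInt (interTop τ) Y) i)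

lemma interTop_sub_int_int (i : I) (Y : Set X) :
    topInt (interTop τ) Y ⊆ topInt (τ i) (topInt (interTop τ) Y) :=
  myIntMaximal (τ i) subset_rfl ((myIsOpenInt (interTop τ) Y) i)

lemma interTop_fix (Y : Set X) :
    topInt (interTop τ) Y ⊆
      (⋂ i, topInt (τ i) Y) ∩ ⋂ i, topInt (τ i) (topInt (interTop τ) Y) := by
  intro x hx
  exact ⟨Set.mem_iInter.2 fun i => interTop_mono τ i Y hx,
    Set.mem_iInter.2 fun i => interTop_sub_int_int τ i Y hx⟩

lemma interTop_ind [Nonempty I] (Y : Set X) :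
    (⋂ i, topInt (τ i) Y) ∩ topInt (interTop τ) (Yᶜ ∪ ⋂ i, topInt (τ i) Y) ⊆
      topInt (interTop τ) Y := by
  set EY : Set X := ⋂ i, topInt (τ i) Y with hEY
  set U : Set X := topInt (interTop τ) (Yᶜ ∪ EY) with hU
  have hUopen : (interTop τ).IsOpen U := myIsOpenInt (interTop τ) _
  have hVeq : ∀ i : I, EY ∩ U = topInt (τ i) Y ∩ U := by
    intro i
    apply Set.Subset.antisymm
    · exact fun x hx => ⟨Set.mem_iInter.1 hx.1 i, hx.2⟩
    · rintro x ⟨hxi, hxU⟩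
      have hxY : x ∈ Y := myIntSubset (τ i) Y hxi
      have hx2 : x ∈ Yᶜ ∪ EY := myIntSubset (interTop τ) _ hxU
      rcases hx2 with h | h
      · exact absurd hxY h
      · exact ⟨h, hxU⟩
  have hVopen : (interTop τ).IsOpen (EY ∩ U) := by
    intro i
    rw [hVeq i]
    exact myIsOpenInter (τ i) (myIsOpenInt (τ i) Y) (hUopen i)
  have hVsub : EY ∩ U ⊆ Y := fun x hx =>
    myIntSubset (τ (Classical.arbitrary I)) Y
      (Set.mem_iInter.1 hx.1 (Classical.arbitrary I))
  exact myIntMaximal (interTop τ) hVsub hVopen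

end Aux

theorem powerset_of_topologies_isS4C {I X : Type*} [Fintype I] [Nonempty I]
    (τ : I → TopologicalSpace X) :
    (S4CStruct.mk (A := Set X) (fun i => topInt (τ i)) (topInt (interTop τ))).IsS4C ∧
    (∀ Y : Set X,
      topInt (interTop τ) Y ⊆
        (⋂ i, topInt (τ i) Y) ∩ ⋂ i, topInt (τ i) (topInt (interTop τ) Y)) ∧
    (∀ Y : Set X,
      (⋂ i, topInt (τ i) Y) ∩ topInt (interTop τ) (Yᶜ ∪ ⋂ i, topInt (τ i) Y) ⊆
        topInt (interTop τ) Y) := by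
  have hE : ∀ Y : Set X,
      (S4CStruct.mk (A := Set X) (fun i => topInt (τ i)) (topInt (interTop τ))).E Y
        = ⋂ i, topInt (τ i) Y := fun Y => finset_inf_eq_iInter _
  refine ⟨⟨?_, ?_, ?_, ?_, ?_, ?_, ?_, ?_, ?_, ?_⟩, fun Y => interTop_fix τ Y,
    fun Y => interTop_ind τ Y⟩
  · exact fun i => myIntUniv (τ i)
  · exact fun i a b => myIntInter (τ i) a b
  · exact fun i a => myIntIdem (τ i) a
  · exact fun i a => myIntSubset (τ i) a
  · exact myIntUniv (interTop τ)
  · exact fun a b => myIntInter (interTop τ) a b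
  · exact fun a => myIntIdem (interTop τ) a
  · exact fun a => myIntSubset (interTop τ) a
  · intro a
    rw [le_inf_iff, hE, hE]
    have h := interTop_fix τ a
    exact ⟨(h.trans Set.inter_subset_left :), (h.trans Set.inter_subset_right :)⟩
  · intro a
    have h2 : (a ⇨ ⋂ i, topInt (τ i) a) = aᶜ ∪ ⋂ i, topInt (τ i) a := by
      rw [himp_eq]; exact Set.union_comm _ _
    rw [hE, h2]
    exact interTop_ind τ a
end

section
/- If the powerset Boolean algebra of a set X expanded with maps □_i (i ∈ I) and C forms an S4^C_I-algebra, then there is a unique family of topologies (τ_i)_{i∈I} on X with □_i = Int_{τ_i} for each i, and moreover C = Int_τ where τ = ⋂_{i∈I} τ_i. -/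
section helpers
variable {X : Type*}
theorem topInt_maximal (t : TopologicalSpace X) {s u : Set X} (h1 : u ⊆ s)
    (h2 : t.IsOpen u) : u ⊆ topInt t s := by
  letI := t; exact interior_maximal h1 h2
theorem topInt_eq_iff (t : TopologicalSpace X) (s : Set X) :
    topInt t s = s ↔ t.IsOpen s := by
  letI := t; exact interior_eq_iff_isOpen
theorem topInt_subset (t : TopologicalSpace X) (s : Set X) : topInt t s ⊆ s := by
  letI := t; exact interior_subset
theorem topInt_isOpen (t : TopologicalSpace X) (s : Set X) : t.IsOpen (topInt t s) := by
  letI := t; exact isOpen_interior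
end helpers

theorem powerset_S4C_unique_topologies {I X : Type*} [Fintype I] [Nonempty I]
    (S : S4CStruct I (Set X)) (hS : S.IsS4C) :
    (∃! τ : I → TopologicalSpace X, ∀ i, S.box i = topInt (τ i)) ∧
    (∀ τ : I → TopologicalSpace X, (∀ i, S.box i = topInt (τ i)) →
      S.C = topInt (interTop τ)) := by
  have boxmono : ∀ i (a b : Set X), a ≤ b → S.box i a ≤ S.box i b := by
    intro i a b h
    have h1 : a ⊓ b = a := inf_eq_left.mpr h
    calc S.box i a = S.box i (a ⊓ b) := by rw [h1]
      _ = S.box i a ⊓ S.box i b := hS.box_inf i a b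
      _ ≤ S.box i b := inf_le_right
  have Cmono : ∀ a b : Set X, a ≤ b → S.C a ≤ S.C b := by
    intro a b h
    have h1 : a ⊓ b = a := inf_eq_left.mpr h
    calc S.C a = S.C (a ⊓ b) := by rw [h1]
      _ = S.C a ⊓ S.C b := hS.C_inf a b
      _ ≤ S.C b := inf_le_right
  have Ele : ∀ i (a : Set X), S.E a ≤ S.box i a := by
    intro i a
    exact Finset.inf_le (Finset.mem_univ i)
  -- the candidate topologies
  let τ0 : I → TopologicalSpace X := fun i =>
    { IsOpen := fun s => S.box i s = s
      isOpen_univ := hS.box_top i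
      isOpen_inter := by
        intro s t hs ht
        show S.box i (s ⊓ t) = s ⊓ t
        rw [hS.box_inf, hs, ht]
      isOpen_sUnion := by
        intro F hF
        apply le_antisymm (hS.box_le i _)
        intro x hx
        obtain ⟨t, htF, hxt⟩ := hx
        have ht : t ≤ S.box i (⋃₀ F) := by
          conv_lhs => rw [← hF t htF]
          exact boxmono i _ _ (Set.subset_sUnion_of_mem htF)
        exact ht hxt }
  have hτ0open : ∀ i (s : Set X), (τ0 i).IsOpen s ↔ S.box i s = s := fun _ _ => Iff.rfl
  have hint : ∀ i, S.box i = topInt (τ0 i) := by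
    intro i
    funext Y
    apply le_antisymm
    · exact topInt_maximal (τ0 i) (hS.box_le i Y) (hS.box_idem i Y)
    · have h1 : (τ0 i).IsOpen (topInt (τ0 i) Y) := topInt_isOpen (τ0 i) Y
      have h2 : topInt (τ0 i) Y ≤ Y := topInt_subset (τ0 i) Y
      calc topInt (τ0 i) Y = S.box i (topInt (τ0 i) Y) := ((hτ0open i _).mp h1).symm
        _ ≤ S.box i Y := boxmono i _ _ h2
  -- criterion: for any τ satisfying the property, opens are exactly box-fixed sets
  have crit : ∀ (τ : I → TopologicalSpace X), (∀ i, S.box i = topInt (τ i)) →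
      ∀ i (s : Set X), (τ i).IsOpen s ↔ S.box i s = s := by
    intro τ hτ i s
    rw [hτ i]
    exact (topInt_eq_iff (τ i) s).symm
  constructor
  · refine ⟨τ0, hint, ?_⟩
    intro τ hτ
    funext i
    apply TopologicalSpace.ext
    funext s
    have := (crit τ hτ i s).trans (hτ0open i s).symm
    exact propext this
  · intro τ hτ
    funext Y
    apply le_antisymm
    · -- C Y is open in interTop τ and ⊆ Y
      have hopen : (interTop τ).IsOpen (S.C Y) := by
        intro i
        rw [crit τ hτ i]
        apply le_antisymm (hS.box_le i _)
        calc S.C Y ≤ S.E Y ⊓ S.E (S.C Y) := hS.fix Y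
          _ ≤ S.E (S.C Y) := inf_le_right
          _ ≤ S.box i (S.C Y) := Ele i _
      exact topInt_maximal (interTop τ) (hS.C_le Y) hopen
    · set s := topInt (interTop τ) Y with hs
      have hsY : s ≤ Y := topInt_subset (interTop τ) Y
      have hsopen : (interTop τ).IsOpen s := topInt_isOpen (interTop τ) Y
      have hbox : ∀ i, S.box i s = s := fun i => (crit τ hτ i s).mp (hsopen i)
      have hEs : S.E s = s := by
        unfold S4CStruct.E
        calc Finset.univ.inf (fun i => S.box i s)
            = Finset.univ.inf (fun _ : I => s) := by
              apply Finset.inf_congr rfl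
              intro i _
              exact hbox i
          _ = s := Finset.inf_const Finset.univ_nonempty _
      have hsCs : s ≤ S.C s := by
        have := hS.ind s
        rwa [hEs, himp_self, hS.C_top, inf_top_eq] at this
      exact hsCs.trans (Cmono s Y hsY)
end

section
/- For an S4^C_I-algebra A and an element d, define a ≺_d b iff b ≤ E d ∧ E a. Then A is standard if and only if, for every d, the accessible (well-founded) part of (A, ≺_d) equals {a ∈ A : a ≰ C d}. -/
private theorem aux_no_self_loop {α : Sort*} {r : α → α → Prop} {x : α}
    (h : Acc r x) (hr : r x x) : False := by
  revert hr
  induction h with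
  | intro y _ ih => exact fun hr => ih y hr hr

theorem standard_iff_accessible_part {I A : Type*} [Fintype I] [Nonempty I] [BooleanAlgebra A]
    (S : S4CStruct I A) (hS : S.IsS4C) :
    S.Standard ↔ ∀ d : A, {a : A | Acc (S.prec d) a} = {a : A | ¬ a ≤ S.C d} := by
  constructor
  · intro hstd d
    ext a
    simp only [Set.mem_setOf_eq]
    constructor
    · intro hacc hle
      -- a ≤ C d gives a self-loop at C d below a
      have hCd : S.prec d (S.C d) (S.C d) := hS.fix d
      have hpa : S.prec d (S.C d) a := le_trans hle (hS.fix d)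
      have haccC : Acc (S.prec d) (S.C d) := hacc.inv hpa
      exact aux_no_self_loop haccC hCd
    · intro hnle
      by_contra hnacc
      have key : ∀ x : A, ¬ Acc (S.prec d) x → ∃ y, S.prec d y x ∧ ¬ Acc (S.prec d) y := by
        intro x hx
        by_contra hcon
        push_neg at hcon
        exact hx (Acc.intro x hcon)
      let g : ℕ → {x : A // ¬ Acc (S.prec d) x} :=
        fun n => Nat.rec ⟨a, hnacc⟩
          (fun _ p => ⟨(key p.1 p.2).choose, (key p.1 p.2).choose_spec.2⟩) n
      have hg : ∀ j, (g j).1 ≤ S.E d ⊓ S.E ((g (j+1)).1) := by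
        intro j
        exact (key (g j).1 (g j).2).choose_spec.1
      exact hnle (hstd d (fun n => (g n).1) hg)
  · intro h d a ha
    by_contra hnle
    have hacc : Acc (S.prec d) (a 0) := (Set.ext_iff.mp (h d) (a 0)).mpr hnle
    have key : ∀ x, Acc (S.prec d) x → ∀ n, x = a n → False := by
      intro x hx
      induction hx with
      | intro y hy ih =>
        intro n hn
        subst hn
        exact ih (a (n+1)) (ha n) (n+1) rfl
    exact key (a 0) hacc 0 rfl
end

section
/- For directed graphs S₁, S₂ with product relation (b₁,b₂) ≺ (c₁,c₂) iff b₁ ≺₁ c₁ and b₂ ≺₂ c₂, the ordinal height of (a,b) in S₁ × S₂ equals min{ht_{S₁}(a), ht_{S₂}(b)} (with ∞ for inaccessible elements, greater than all ordinals). -/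
/- Ordinal height in a directed graph, with `⊤` (infinity) for inaccessible elements. -/
open Classical in
noncomputable def graphHt {α : Type*} (r : α → α → Prop) (a : α) : WithTop Ordinal :=
  if h : Acc r a then ((h.rank : Ordinal) : WithTop Ordinal) else ⊤

universe u

section Aux

variable {α β : Type u} {r₁ : α → α → Prop} {r₂ : β → β → Prop}

private lemma acc_prod_left {a : α} (h : Acc r₁ a) (b : β) :
    Acc (fun p q : α × β => r₁ p.1 q.1 ∧ r₂ p.2 q.2) (a, b) := by
  induction h generalizing b with
  | intro a _ ih =>
    constructor
    rintro ⟨c, d⟩ ⟨hc, _⟩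
    exact ih c hc d

private lemma acc_prod_right {b : β} (h : Acc r₂ b) (a : α) :
    Acc (fun p q : α × β => r₁ p.1 q.1 ∧ r₂ p.2 q.2) (a, b) := by
  induction h generalizing a with
  | intro b _ ih =>
    constructor
    rintro ⟨c, d⟩ ⟨_, hd⟩
    exact ih d hd c

private lemma rank_prod_le_left {a : α} (h₁ : Acc r₁ a) :
    ∀ (b : β) (h : Acc (fun p q : α × β => r₁ p.1 q.1 ∧ r₂ p.2 q.2) (a, b)),
      h.rank ≤ h₁.rank := by
  induction h₁ with
  | intro a ha ih =>
    intro b h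
    rw [h.rank_eq]
    apply ciSup_le'
    rintro ⟨⟨c, d⟩, hc, hd⟩
    refine Order.succ_le_of_lt (lt_of_le_of_lt (ih c hc d _) ?_)
    have := Acc.rank_lt_of_rel (Acc.intro a ha) hc
    rwa [Subsingleton.elim ((Acc.intro a ha).inv hc) (ha c hc)] at this

private lemma rank_prod_le_right {b : β} (h₂ : Acc r₂ b) :
    ∀ (a : α) (h : Acc (fun p q : α × β => r₁ p.1 q.1 ∧ r₂ p.2 q.2) (a, b)),
      h.rank ≤ h₂.rank := by
  induction h₂ with
  | intro b hb ih =>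
    intro a h
    rw [h.rank_eq]
    apply ciSup_le'
    rintro ⟨⟨c, d⟩, hc, hd⟩
    refine Order.succ_le_of_lt (lt_of_le_of_lt (ih d hd c _) ?_)
    have := Acc.rank_lt_of_rel (Acc.intro b hb) hd
    rwa [Subsingleton.elim ((Acc.intro b hb).inv hd) (hb d hd)] at this

private lemma exists_of_lt_graphHt {r : α → α → Prop} {a : α} {o : Ordinal}
    (h : (o : WithTop Ordinal) < graphHt r a) :
    ∃ c, r c a ∧ (o : WithTop Ordinal) ≤ graphHt r c := by
  unfold graphHt at *
  split at h
  next ha =>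
    rw [WithTop.coe_lt_coe, ha.rank_eq, Ordinal.lt_iSup_iff] at h
    obtain ⟨⟨c, hc⟩, h'⟩ := h
    rw [Order.lt_succ_iff] at h'
    refine ⟨c, hc, ?_⟩
    rw [dif_pos (ha.inv hc), WithTop.coe_le_coe]
    exact h'
  next ha =>
    by_cases hall : ∀ c, r c a → Acc r c
    · exact absurd (Acc.intro a hall) ha
    · push_neg at hall
      obtain ⟨c, hc, hcn⟩ := hall
      exact ⟨c, hc, by rw [dif_neg hcn]; exact le_top⟩

private lemma min_le_rank_prod {p : α × β}
    (h : Acc (fun p q : α × β => r₁ p.1 q.1 ∧ r₂ p.2 q.2) p) :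
    min (graphHt r₁ p.1) (graphHt r₂ p.2) ≤ (h.rank : WithTop Ordinal) := by
  induction h with
  | intro p hp ih =>
    obtain ⟨a, b⟩ := p
    simp only
    apply le_of_forall_lt
    intro x hx
    lift x to Ordinal using (hx.trans_le le_top).ne
    have h1 := exists_of_lt_graphHt (hx.trans_le (min_le_left _ _))
    have h2 := exists_of_lt_graphHt (hx.trans_le (min_le_right _ _))
    obtain ⟨c, hc, hc'⟩ := h1
    obtain ⟨d, hd, hd'⟩ := h2
    have key : (x : WithTop Ordinal) ≤ ((hp (c, d) ⟨hc, hd⟩).rank : WithTop Ordinal) :=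
      le_trans (le_min hc' hd') (ih (c, d) ⟨hc, hd⟩)
    refine lt_of_le_of_lt key ?_
    rw [WithTop.coe_lt_coe]
    have := Acc.rank_lt_of_rel (r := fun p q : α × β => r₁ p.1 q.1 ∧ r₂ p.2 q.2) (a := (c, d))
      (Acc.intro (a, b) hp) ⟨hc, hd⟩
    rwa [Subsingleton.elim ((Acc.intro (a, b) hp).inv ⟨hc, hd⟩) (hp (c, d) ⟨hc, hd⟩)] at this

end Aux

theorem graphHt_prod {α β : Type u} (r₁ : α → α → Prop) (r₂ : β → β → Prop)
    (a : α) (b : β) :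
    graphHt (fun p q : α × β => r₁ p.1 q.1 ∧ r₂ p.2 q.2) (a, b) =
      min (graphHt r₁ a) (graphHt r₂ b) := by
  apply le_antisymm
  · apply le_min
    · by_cases ha : Acc r₁ a
      · have hP := acc_prod_left (r₂ := r₂) ha b
        rw [show graphHt _ (a, b) = ((hP.rank : Ordinal) : WithTop Ordinal) from dif_pos hP,
          show graphHt r₁ a = ((ha.rank : Ordinal) : WithTop Ordinal) from dif_pos ha,
          WithTop.coe_le_coe]
        exact rank_prod_le_left ha b hP
      · rw [show graphHt r₁ a = ⊤ from dif_neg ha]; exact le_top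
    · by_cases hb : Acc r₂ b
      · have hP := acc_prod_right (r₁ := r₁) hb a
        rw [show graphHt _ (a, b) = ((hP.rank : Ordinal) : WithTop Ordinal) from dif_pos hP,
          show graphHt r₂ b = ((hb.rank : Ordinal) : WithTop Ordinal) from dif_pos hb,
          WithTop.coe_le_coe]
        exact rank_prod_le_right hb a hP
      · rw [show graphHt r₂ b = ⊤ from dif_neg hb]; exact le_top
  · by_cases hP : Acc (fun p q : α × β => r₁ p.1 q.1 ∧ r₂ p.2 q.2) (a, b)
    · rw [show graphHt _ (a, b) = ((hP.rank : Ordinal) : WithTop Ordinal) from dif_pos hP]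
      exact min_le_rank_prod hP
    · rw [show graphHt _ (a, b) = ⊤ from dif_neg hP]; exact le_top
end

section
/- In a standard S4^C_I-algebra, for any elements c, e, d: ht_d(c ∨ e) = min{ht_d(c), ht_d(e)}, where ht_d is the ordinal height with respect to the relation a ≺_d b iff b ≤ E d ∧ E a (with ∞ for inaccessible elements). -/
section Aux

variable {α : Type*} [Lattice α] {r : α → α → Prop}

lemma graphHt_acc {a : α} (h : Acc r a) : graphHt r a = (h.rank : WithTop Ordinal) := by
  rw [graphHt, dif_pos h]

lemma graphHt_not_acc {a : α} (h : ¬ Acc r a) : graphHt r a = ⊤ := by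
  rw [graphHt, dif_neg h]

lemma exists_not_acc {c : α} (h : ¬ Acc r c) : ∃ a, r a c ∧ ¬ Acc r a := by
  by_contra hcon
  push_neg at hcon
  exact h (Acc.intro c fun a ha => hcon a ha)

/-- If every predecessor of `z` is a predecessor of `x`, then `z` is accessible whenever `x` is. -/
lemma acc_of_pred_subset {x z : α} (hsub : ∀ y, r y z → r y x) (hx : Acc r x) : Acc r z :=
  Acc.intro z fun y hy => hx.inv (hsub y hy)

lemma graphHt_le_of_pred_subset {x z : α} (hsub : ∀ y, r y z → r y x) :
    graphHt r z ≤ graphHt r x := by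
  by_cases hx : Acc r x
  · have hz : Acc r z := acc_of_pred_subset hsub hx
    rw [graphHt_acc hx, graphHt_acc hz, WithTop.coe_le_coe, Acc.rank_eq]
    apply Ordinal.iSup_le
    rintro ⟨y, hy⟩
    rw [Order.succ_le_iff]
    exact Acc.rank_lt_of_rel hx (hsub y hy)
  · rw [graphHt_not_acc hx]; exact le_top

variable (hr₁ : ∀ a b x y : α, r a x → r b y → r (a ⊔ b) (x ⊔ y))
variable (hr₂ : ∀ (a x y : α), r a (x ⊔ y) → r a x ∧ r a y)

include hr₁ in
lemma acc_sup_rev : ∀ x : α, Acc r x → ∀ c e, c ⊔ e = x → Acc r c ∨ Acc r e := by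
  intro x hx
  induction hx with
  | intro x hpred IH =>
    intro c e hce
    by_contra hcon
    push_neg at hcon
    obtain ⟨a, hac, ha⟩ := exists_not_acc hcon.1
    obtain ⟨b, hbe, hb⟩ := exists_not_acc hcon.2
    have hab : r (a ⊔ b) x := hce ▸ hr₁ a b c e hac hbe
    rcases IH _ hab a b rfl with h | h
    · exact ha h
    · exact hb h

include hr₁ hr₂ in
lemma graphHt_sup_of_acc {c : α} (hc : Acc r c) :
    ∀ e, graphHt r (c ⊔ e) = min (graphHt r c) (graphHt r e) := by
  induction hc with
  | intro c hpredc IH =>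
    intro e
    have hc : Acc r c := Acc.intro c hpredc
    have hce : Acc r (c ⊔ e) := acc_of_pred_subset (fun y hy => (hr₂ y c e hy).1) hc
    refine le_antisymm (le_min ?_ ?_) ?_
    · exact graphHt_le_of_pred_subset fun y hy => (hr₂ y c e hy).1
    · exact graphHt_le_of_pred_subset fun y hy => (hr₂ y c e hy).2
    · by_cases he : Acc r e
      · rw [graphHt_acc hc, graphHt_acc he, graphHt_acc hce, ← WithTop.coe_min,
          WithTop.coe_le_coe]
        refine le_of_forall_lt fun o ho => ?_
        rw [lt_min_iff] at ho
        obtain ⟨hoc, hoe⟩ := ho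
        rw [Acc.rank_eq, Ordinal.lt_iSup_iff] at hoc hoe
        obtain ⟨⟨a, ha⟩, hoa⟩ := hoc
        obtain ⟨⟨b, hb⟩, hob⟩ := hoe
        rw [Order.lt_succ_iff] at hoa hob
        have hab : r (a ⊔ b) (c ⊔ e) := hr₁ a b c e ha hb
        have hmin := IH a ha b
        rw [graphHt_acc (hc.inv ha), graphHt_acc (he.inv hb), graphHt_acc (hce.inv hab),
          ← WithTop.coe_min, WithTop.coe_inj] at hmin
        calc o ≤ (hce.inv hab).rank := by rw [hmin]; exact le_min hoa hob
        _ < hce.rank := Acc.rank_lt_of_rel hce hab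
      · obtain ⟨b, hbe, hb⟩ := exists_not_acc he
        rw [graphHt_acc hc, graphHt_not_acc he, min_eq_left le_top, graphHt_acc hce,
          WithTop.coe_le_coe]
        refine le_of_forall_lt fun o ho => ?_
        rw [Acc.rank_eq, Ordinal.lt_iSup_iff] at ho
        obtain ⟨⟨a, ha⟩, hoa⟩ := ho
        rw [Order.lt_succ_iff] at hoa
        have hab : r (a ⊔ b) (c ⊔ e) := hr₁ a b c e ha hbe
        have hmin := IH a ha b
        rw [graphHt_acc (hc.inv ha), graphHt_not_acc hb, min_eq_left le_top,
          graphHt_acc (hce.inv hab), WithTop.coe_inj] at hmin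
        calc o ≤ (hce.inv hab).rank := by rw [hmin]; exact hoa
        _ < hce.rank := Acc.rank_lt_of_rel hce hab

include hr₁ hr₂ in
lemma graphHt_sup_aux (c e : α) :
    graphHt r (c ⊔ e) = min (graphHt r c) (graphHt r e) := by
  by_cases hc : Acc r c
  · exact graphHt_sup_of_acc hr₁ hr₂ hc e
  · by_cases he : Acc r e
    · rw [sup_comm, graphHt_sup_of_acc hr₁ hr₂ he c, min_comm]
    · have hce : ¬ Acc r (c ⊔ e) := fun h => by
        rcases acc_sup_rev hr₁ _ h c e rfl with h' | h'
        · exact hc h'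
        · exact he h'
      rw [graphHt_not_acc hc, graphHt_not_acc he, graphHt_not_acc hce, min_self]

end Aux


theorem graphHt_sup {I A : Type*} [Fintype I] [Nonempty I] [BooleanAlgebra A]
    (S : S4CStruct I A) (hS : S.IsS4C) (hstd : S.Standard) (c e d : A) :
    graphHt (S.prec d) (c ⊔ e) = min (graphHt (S.prec d) c) (graphHt (S.prec d) e) := by
  have hmono : ∀ a b : A, a ≤ b → S.E a ≤ S.E b := by
    intro a b hab
    apply Finset.inf_mono_fun
    intro i _
    have : S.box i a ⊓ S.box i b = S.box i a := by
      rw [← hS.box_inf, inf_eq_left.mpr hab]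
    exact inf_eq_left.mp this
  have hr₁ : ∀ a b x y : A, S.prec d a x → S.prec d b y → S.prec d (a ⊔ b) (x ⊔ y) := by
    intro a b x y hax hby
    refine sup_le (hax.trans ?_) (hby.trans ?_)
    · exact inf_le_inf le_rfl (hmono a (a ⊔ b) le_sup_left)
    · exact inf_le_inf le_rfl (hmono b (a ⊔ b) le_sup_right)
  have hr₂ : ∀ a x y : A, S.prec d a (x ⊔ y) → S.prec d a x ∧ S.prec d a y := by
    intro a x y h
    exact ⟨le_sup_left.trans h, le_sup_right.trans h⟩
  exact graphHt_sup_aux hr₁ hr₂ c e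
end

section
/- In a standard S4^C_I-algebra, for any elements c, d: ht_d(c) + 1 ≤ ht_d(E d ∧ E c), where ht_d is ordinal height with respect to a ≺_d b iff b ≤ E d ∧ E a, and ∞ + 1 := ∞. -/
theorem graphHt_succ_le {I A : Type*} [Fintype I] [Nonempty I] [BooleanAlgebra A]
    (S : S4CStruct I A) (hS : S.IsS4C) (hstd : S.Standard) (c d : A) :
    graphHt (S.prec d) c + 1 ≤ graphHt (S.prec d) (S.E d ⊓ S.E c) := by
  unfold graphHt
  by_cases h : Acc (S.prec d) (S.E d ⊓ S.E c)
  · have hrel : S.prec d c (S.E d ⊓ S.E c) := le_rfl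
    have hc : Acc (S.prec d) c := h.inv hrel
    rw [dif_pos h, dif_pos hc]
    have hlt : (h.inv hrel).rank < h.rank := Acc.rank_lt_of_rel h hrel
    have : hc.rank + 1 ≤ h.rank := Order.add_one_le_of_lt hlt
    calc (hc.rank : WithTop Ordinal) + 1 = ((hc.rank + 1 : Ordinal) : WithTop Ordinal) := by
          push_cast; ring
      _ ≤ (h.rank : WithTop Ordinal) := by exact_mod_cast this
  · rw [dif_neg h]; exact le_top
end

section
/- In a standard S4^C_I-algebra A, for every element d and every ordinal γ, the set M_d(γ) := {a ∈ A : γ ≤ ht_d(a)} is an ideal of (the Boolean part of) A. -/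
lemma graphHt_of_not_acc {α : Type*} {r : α → α → Prop} {a : α} (h : ¬ Acc r a) :
    graphHt r a = ⊤ := by
  rw [graphHt, dif_neg h]

lemma graphHt_of_acc {α : Type*} {r : α → α → Prop} {a : α} (h : Acc r a) :
    graphHt r a = (h.rank : Ordinal) := by
  rw [graphHt, dif_pos h]

/-- From `β < graphHt r a` we can extract a predecessor of `a` of height `≥ β`. -/
lemma exists_pred {α : Type*} {r : α → α → Prop} {a : α} {β : Ordinal}
    (h : (β : WithTop Ordinal) < graphHt r a) :
    ∃ x, r x a ∧ (β : WithTop Ordinal) ≤ graphHt r x := by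
  by_cases ha : Acc r a
  · rw [graphHt_of_acc ha, WithTop.coe_lt_coe, ha.rank_eq, Ordinal.lt_iSup_iff] at h
    obtain ⟨⟨x, hx⟩, hlt⟩ := h
    refine ⟨x, hx, ?_⟩
    rw [graphHt_of_acc (ha.inv hx), WithTop.coe_le_coe]
    exact Order.lt_succ_iff.mp hlt
  · have : ∃ x, r x a ∧ ¬ Acc r x := by
      by_contra hc
      push_neg at hc
      exact ha (Acc.intro a fun x hx => hc x hx)
    obtain ⟨x, hx, hxa⟩ := this
    exact ⟨x, hx, by rw [graphHt_of_not_acc hxa]; exact le_top⟩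

/-- Conversely, bound the height from below by predecessors. -/
lemma le_graphHt {α : Type*} {r : α → α → Prop} {a : α} {γ : Ordinal}
    (h : ∀ β < γ, ∃ x, r x a ∧ (β : WithTop Ordinal) ≤ graphHt r x) :
    (γ : WithTop Ordinal) ≤ graphHt r a := by
  by_cases ha : Acc r a
  · rw [graphHt_of_acc ha, WithTop.coe_le_coe]
    refine le_of_forall_lt fun β hβ => ?_
    obtain ⟨x, hx, hβx⟩ := h β hβ
    have hxacc : Acc r x := ha.inv hx
    rw [graphHt_of_acc hxacc, WithTop.coe_le_coe] at hβx
    exact hβx.trans_lt (Acc.rank_lt_of_rel ha hx)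
  · rw [graphHt_of_not_acc ha]; exact le_top

namespace S4CStruct

variable {I A : Type*} [Fintype I] [BooleanAlgebra A]

lemma E_mono (S : S4CStruct I A) (hS : S.IsS4C) {a b : A} (hab : a ≤ b) : S.E a ≤ S.E b := by
  refine Finset.inf_mono_fun fun i _ => ?_
  have : S.box i a = S.box i a ⊓ S.box i b := by
    rw [← hS.box_inf, inf_eq_left.2 hab]
  rw [this]; exact inf_le_right

lemma graphHt_antitone (S : S4CStruct I A) {d a b : A} (hba : b ≤ a) :
    graphHt (S.prec d) a ≤ graphHt (S.prec d) b := by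
  by_cases hb : Acc (S.prec d) b
  · have hpred : ∀ x, S.prec d x a → S.prec d x b := fun x hx => hba.trans hx
    have ha : Acc (S.prec d) a := Acc.intro a fun x hx => hb.inv (hpred x hx)
    rw [graphHt_of_acc ha, graphHt_of_acc hb, WithTop.coe_le_coe]
    clear hba
    induction ha with
    | intro a hacc ih =>
      rw [Acc.rank_eq]
      refine Ordinal.iSup_le fun ⟨x, hx⟩ => Order.succ_le_of_lt ?_
      exact (Acc.rank_lt_of_rel hb (hpred x hx))
  · rw [graphHt_of_not_acc hb]; exact le_top
end S4CStruct

theorem M_isIdeal {I A : Type*} [Fintype I] [Nonempty I] [BooleanAlgebra A]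
    (S : S4CStruct I A) (hS : S.IsS4C) (hstd : S.Standard) (d : A) (γ : Ordinal) :
    Order.IsIdeal {a : A | (γ : WithTop Ordinal) ≤ graphHt (S.prec d) a} := by
  have key : ∀ γ : Ordinal, ∀ a b : A,
      (γ : WithTop Ordinal) ≤ graphHt (S.prec d) a →
      (γ : WithTop Ordinal) ≤ graphHt (S.prec d) b →
      (γ : WithTop Ordinal) ≤ graphHt (S.prec d) (a ⊔ b) := by
    intro γ
    induction γ using Ordinal.induction with
    | h γ IH =>
      intro a b ha hb
      refine le_graphHt fun β hβ => ?_
      have hβa : (β : WithTop Ordinal) < graphHt (S.prec d) a :=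
        lt_of_lt_of_le (WithTop.coe_lt_coe.2 hβ) ha
      have hβb : (β : WithTop Ordinal) < graphHt (S.prec d) b :=
        lt_of_lt_of_le (WithTop.coe_lt_coe.2 hβ) hb
      obtain ⟨x, hx, hxβ⟩ := exists_pred hβa
      obtain ⟨y, hy, hyβ⟩ := exists_pred hβb
      refine ⟨x ⊔ y, ?_, IH β hβ x y hxβ hyβ⟩
      have h1 : a ≤ S.E d ⊓ S.E (x ⊔ y) :=
        hx.trans (inf_le_inf le_rfl (S.E_mono hS le_sup_left))
      have h2 : b ≤ S.E d ⊓ S.E (x ⊔ y) :=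
        hy.trans (inf_le_inf le_rfl (S.E_mono hS le_sup_right))
      exact sup_le h1 h2
  constructor
  · intro a b hba ha
    exact le_trans ha (S.graphHt_antitone hba)
  · refine ⟨⊥, ?_⟩
    have hirr : ∀ c : A, Acc (S.prec d) c → ¬ S.prec d c c := by
      intro c hc
      induction hc with
      | intro c _ ih => exact fun hcc => ih c hcc hcc
    have : ¬ Acc (S.prec d) (⊥ : A) := fun h => hirr ⊥ h bot_le
    simp only [Set.mem_setOf_eq, graphHt_of_not_acc this]
    exact le_top
  · intro a ha b hb
    exact ⟨a ⊔ b, key γ a b ha hb, le_sup_left, le_sup_right⟩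
end

section
/- For any standard S4^C_I-algebra A there is a family of topologies (τ_i)_{i∈I} on the set Ult(A) of ultrafilters of A such that for every a ∈ A and i ∈ I, the Stone set {u : □_i a ∈ u} equals Int_{τ_i}({u : a ∈ u}), and moreover {u : C a ∈ u} = Int_τ({u : a ∈ u}) for τ = ⋂_{i∈I} τ_i. -/
/-- An ultrafilter of a Boolean algebra. -/
structure BoolUlt (A : Type*) [BooleanAlgebra A] where
  carrier : Set A
  top_mem : ⊤ ∈ carrier
  bot_not_mem : ⊥ ∉ carrier
  inf_mem : ∀ a b, a ∈ carrier → b ∈ carrier → a ⊓ b ∈ carrier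
  mem_of_le : ∀ a b, a ≤ b → a ∈ carrier → b ∈ carrier
  mem_or_compl_mem : ∀ a, a ∈ carrier ∨ aᶜ ∈ carrier

/-- The Stone set `â = {u : ultrafilter | a ∈ u}`. -/
def boolHat {A : Type*} [BooleanAlgebra A] (a : A) : Set (BoolUlt A) :=
  {u | a ∈ u.carrier}

open Set TopologicalSpace Topology

namespace BoolUlt

variable {A : Type*} [BooleanAlgebra A]

def ofIsPrime (J : Order.Ideal A) (hJ : J.IsPrime) : BoolUlt A where
  carrier := (J : Set A)ᶜ
  top_mem := Order.Ideal.isProper_iff_top_notMem.1 hJ.toIsProper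
  bot_not_mem h := h J.bot_mem
  inf_mem _ _ ha hb h := (hJ.mem_or_mem h).elim ha hb
  mem_of_le _ _ hab ha hb := ha (J.lower hab hb)
  mem_or_compl_mem _ := hJ.toIsProper.notMem_or_compl_notMem

theorem exists_mem_of_notMem {J : Order.Ideal A} {b : A} (hb : b ∉ J) :
    ∃ u : BoolUlt A, b ∈ u.carrier ∧ ∀ c ∈ J, c ∉ u.carrier := by
  have hdisj : Disjoint (Order.PFilter.principal b : Set A) J :=
    Set.disjoint_left.2 fun c hbc hc => hb (J.lower hbc hc)
  obtain ⟨J', hJ', hJJ', hdisj'⟩ := DistribLattice.prime_ideal_of_disjoint_filter_ideal hdisj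
  exact ⟨ofIsPrime J' hJ', Set.disjoint_left.1 hdisj' (Order.PFilter.mem_principal.2 le_rfl),
    fun c hc hcu => hcu (hJJ' hc)⟩

theorem mem_or_mem_of_sup_mem (u : BoolUlt A) {a b : A} (h : a ⊔ b ∈ u.carrier) :
    a ∈ u.carrier ∨ b ∈ u.carrier :=
  (u.mem_or_compl_mem a).imp_right fun hac =>
    u.mem_of_le _ _ (by rw [inf_sup_right, inf_compl_self, bot_sup_eq]; exact inf_le_left)
      (u.inf_mem _ _ h hac)

end BoolUlt

section Stone

variable {A : Type*} [BooleanAlgebra A]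

@[simp]
theorem boolHat_top : boolHat (⊤ : A) = univ :=
  eq_univ_of_forall BoolUlt.top_mem

@[simp]
theorem boolHat_bot : boolHat (⊥ : A) = ∅ :=
  eq_empty_of_forall_notMem BoolUlt.bot_not_mem

theorem boolHat_inf (a b : A) : boolHat (a ⊓ b) = boolHat a ∩ boolHat b :=
  Set.ext fun u => ⟨fun h => ⟨u.mem_of_le _ _ inf_le_left h, u.mem_of_le _ _ inf_le_right h⟩,
    fun h => u.inf_mem _ _ h.1 h.2⟩

theorem boolHat_sup (a b : A) : boolHat (a ⊔ b) = boolHat a ∪ boolHat b :=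
  Set.ext fun u => ⟨u.mem_or_mem_of_sup_mem,
    fun h => h.elim (u.mem_of_le _ _ le_sup_left) (u.mem_of_le _ _ le_sup_right)⟩

theorem boolHat_finset_sup {ι : Type*} (t : Finset ι) (f : ι → A) :
    boolHat (t.sup f) = ⋃ i ∈ t, boolHat (f i) := by
  classical
  induction t using Finset.induction_on with
  | empty => simp
  | insert i t _ ih => simp [boolHat_sup, ih]

theorem boolHat_mono {a b : A} (h : a ≤ b) : boolHat a ⊆ boolHat b :=
  fun u => u.mem_of_le a b h

theorem boolHat_subset_boolHat {a b : A} : boolHat a ⊆ boolHat b ↔ a ≤ b := by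
  refine ⟨fun h => ?_, boolHat_mono⟩
  by_contra hab
  obtain ⟨u, hau, hbu⟩ := BoolUlt.exists_mem_of_notMem (J := Order.Ideal.principal b) hab
  exact hbu b Order.Ideal.mem_principal_self (h hau)

theorem exists_finset_le_sup_of_boolHat_subset {ι : Type*} {b : A} {f : ι → A}
    (h : boolHat b ⊆ ⋃ i, boolHat (f i)) : ∃ t : Finset ι, b ≤ t.sup f := by
  classical
  have hJ : Order.IsIdeal {y : A | ∃ t : Finset ι, y ≤ t.sup f} :=
    { IsLowerSet := fun _ _ hyx ⟨t, ht⟩ => ⟨t, hyx.trans ht⟩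
      Nonempty := ⟨⊥, ∅, bot_le⟩
      Directed := fun x ⟨s, hs⟩ y ⟨t, ht⟩ => ⟨x ⊔ y,
        ⟨s ∪ t, by rw [Finset.sup_union]; exact sup_le_sup hs ht⟩, le_sup_left, le_sup_right⟩ }
  by_contra hb
  obtain ⟨u, hbu, hJu⟩ := BoolUlt.exists_mem_of_notMem (J := hJ.toIdeal) hb
  obtain ⟨i, hiu⟩ := mem_iUnion.1 (h hbu)
  exact hJu (f i) ⟨{i}, by simp⟩ hiu

end Stone

structure IsInteriorOperator {A : Type*} [SemilatticeInf A] [OrderTop A] (f : A → A) : Prop where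
  map_top : f ⊤ = ⊤
  map_inf : ∀ a b, f (a ⊓ b) = f a ⊓ f b
  map_map : ∀ a, f (f a) = f a
  apply_le : ∀ a, f a ≤ a

namespace IsInteriorOperator

variable {A : Type*} [SemilatticeInf A] [OrderTop A] {f : A → A}

theorem monotone (hf : IsInteriorOperator f) : Monotone f := fun a b hab => by
  simpa [← hf.map_inf, inf_eq_left.2 hab] using inf_le_right (a := f a) (b := f b)

theorem le_apply_of_le (hf : IsInteriorOperator f) {a b : A} (hb : f b = b) (h : b ≤ a) :
    b ≤ f a :=
  hb ▸ hf.monotone h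

end IsInteriorOperator

section InteriorTopology

variable {A : Type*} [BooleanAlgebra A] {f : A → A}

def interiorTopology (f : A → A) : TopologicalSpace (BoolUlt A) :=
  generateFrom (range fun b => boolHat (f b))

theorem isTopologicalBasis_interiorTopology (hf : IsInteriorOperator f) :
    @IsTopologicalBasis _ (interiorTopology f) (range fun b => boolHat (f b)) := by
  let _ := interiorTopology f
  refine ⟨?_, eq_univ_of_univ_subset (subset_sUnion_of_mem ⟨⊤, by simp [hf.map_top]⟩), rfl⟩
  rintro _ ⟨b, rfl⟩ _ ⟨c, rfl⟩ u hu
  refine ⟨boolHat (f (b ⊓ c)), ⟨_, rfl⟩, ?_, ?_⟩ <;> rw [hf.map_inf, boolHat_inf]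
  exact hu

theorem isOpen_boolHat_apply (b : A) : IsOpen[interiorTopology f] (boolHat (f b)) :=
  .basic _ ⟨b, rfl⟩

theorem exists_mem_boolHat_subset_of_isOpen (hf : IsInteriorOperator f) {U : Set (BoolUlt A)}
    (hU : IsOpen[interiorTopology f] U) {u : BoolUlt A} (hu : u ∈ U) :
    ∃ b, f b ∈ u.carrier ∧ boolHat (f b) ⊆ U := by
  let _ := interiorTopology f
  obtain ⟨_, ⟨b, rfl⟩, hub, hbU⟩ := (isTopologicalBasis_interiorTopology hf).isOpen_iff.1 hU u hu
  exact ⟨b, hub, hbU⟩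

theorem subset_boolHat_apply_of_isOpen (hf : IsInteriorOperator f) {U : Set (BoolUlt A)}
    (hU : IsOpen[interiorTopology f] U) {a : A} (hUa : U ⊆ boolHat a) : U ⊆ boolHat (f a) :=
  fun u hu => by
    obtain ⟨b, hub, hbU⟩ := exists_mem_boolHat_subset_of_isOpen hf hU hu
    exact boolHat_mono (hf.le_apply_of_le (hf.map_map b)
      (boolHat_subset_boolHat.1 (hbU.trans hUa))) hub

theorem boolHat_apply_eq_topInt (hf : IsInteriorOperator f) (a : A) :
    boolHat (f a) = topInt (interiorTopology f) (boolHat a) :=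
  letI := interiorTopology f
  subset_antisymm (interior_maximal (boolHat_mono (hf.apply_le a)) (isOpen_boolHat_apply a))
    (subset_boolHat_apply_of_isOpen hf isOpen_interior interior_subset)

theorem exists_le_apply_of_boolHat_subset (hf : IsInteriorOperator f) {U : Set (BoolUlt A)}
    (hU : IsOpen[interiorTopology f] U) {b : A} (hb : boolHat b ⊆ U) :
    ∃ c, b ≤ f c ∧ boolHat (f c) ⊆ U := by
  have hcover : boolHat b ⊆ ⋃ d : {d // boolHat (f d) ⊆ U}, boolHat (f d) := fun u hu => by
    obtain ⟨d, hdu, hdU⟩ := exists_mem_boolHat_subset_of_isOpen hf hU (hb hu)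
    exact mem_iUnion.2 ⟨⟨d, hdU⟩, hdu⟩
  obtain ⟨t, hbt⟩ := exists_finset_le_sup_of_boolHat_subset hcover
  set c := t.sup fun d => f d
  have hc : c ≤ f c := Finset.sup_le fun d hd =>
    hf.le_apply_of_le (hf.map_map d) (Finset.le_sup (f := fun d => f d.1) hd)
  refine ⟨c, hbt.trans hc, (boolHat_mono (hf.apply_le c)).trans ?_⟩
  rw [boolHat_finset_sup]
  exact iUnion₂_subset fun d _ => d.2

end InteriorTopology

namespace S4CStruct

variable {I A : Type*} [Fintype I] [BooleanAlgebra A] {S : S4CStruct I A}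

theorem le_E_iff {a b : A} : b ≤ S.E a ↔ ∀ i, b ≤ S.box i a := by
  simp [E, Finset.le_inf_iff]

theorem IsS4C.isInteriorOperator_box (hS : S.IsS4C) (i : I) : IsInteriorOperator (S.box i) :=
  ⟨hS.box_top i, hS.box_inf i, hS.box_idem i, hS.box_le i⟩

theorem IsS4C.box_C (hS : S.IsS4C) (i : I) (a : A) : S.box i (S.C a) = S.C a :=
  le_antisymm (hS.box_le i _) (le_E_iff.1 ((hS.fix a).trans inf_le_right) i)

theorem Standard.le_C_of_forall_exists (hstd : S.Standard) {d : A} {P : A → Prop}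
    (hE : ∀ b, P b → b ≤ S.E d) (hstep : ∀ b, P b → ∃ b', P b' ∧ b ≤ S.E b') {b : A}
    (hb : P b) : b ≤ S.C d := by
  choose next hnext using hstep
  let seq : ℕ → {b // P b} := fun n => (fun p => ⟨next p.1 p.2, (hnext p.1 p.2).1⟩)^[n] ⟨b, hb⟩
  refine hstd d (fun n => (seq n).1) fun j => le_inf (hE _ (seq j).2) ?_
  simp only [seq, Function.iterate_succ_apply']
  exact (hnext _ _).2

theorem exists_le_E_of_boolHat_subset (hS : S.IsS4C) {U : Set (BoolUlt A)}
    (hU : ∀ i, IsOpen[interiorTopology (S.box i)] U) {b : A} (hb : boolHat b ⊆ U) :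
    ∃ b', boolHat b' ⊆ U ∧ b ≤ S.E b' := by
  choose c hbc hcU using fun i => exists_le_apply_of_boolHat_subset
    (hS.isInteriorOperator_box i) (hU i) hb
  refine ⟨Finset.univ.sup fun i => S.box i (c i), ?_, le_E_iff.2 fun i => ?_⟩
  · rw [boolHat_finset_sup]
    exact iUnion₂_subset fun i _ => hcU i
  · exact (hbc i).trans <| (hS.isInteriorOperator_box i).le_apply_of_le (hS.box_idem i _)
      (Finset.le_sup (f := fun i => S.box i (c i)) (Finset.mem_univ i))

theorem boolHat_C_eq_topInt [Nonempty I] (hS : S.IsS4C) (hstd : S.Standard) (a : A) :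
    boolHat (S.C a) = topInt (interTop fun i => interiorTopology (S.box i)) (boolHat a) := by
  let _ := interTop fun i => interiorTopology (S.box i)
  have hU : ∀ i, IsOpen[interiorTopology (S.box i)] (interior (boolHat a)) :=
    isOpen_interior (s := boolHat a)
  refine subset_antisymm (interior_maximal (boolHat_mono (hS.C_le a)) fun i => ?_) fun u hu => ?_
  · rw [← hS.box_C i]
    exact isOpen_boolHat_apply _
  have hE : ∀ b, boolHat b ⊆ interior (boolHat a) → b ≤ S.E a := fun b hb =>
    le_E_iff.2 fun i => boolHat_subset_boolHat.1 <| hb.trans <|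
      subset_boolHat_apply_of_isOpen (hS.isInteriorOperator_box i) (hU i) interior_subset
  obtain ⟨b, hbu, hbU⟩ := exists_mem_boolHat_subset_of_isOpen
    (hS.isInteriorOperator_box (Classical.arbitrary I)) (hU _) hu
  exact boolHat_mono (hstd.le_C_of_forall_exists hE
    (fun _ => exists_le_E_of_boolHat_subset hS hU) hbU) hbu

end S4CStruct

theorem representation_of_standard {I A : Type*} [Fintype I] [Nonempty I] [BooleanAlgebra A]
    (S : S4CStruct I A) (hS : S.IsS4C) (hstd : S.Standard) :
    ∃ τ : I → TopologicalSpace (BoolUlt A),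
      (∀ (a : A) (i : I), boolHat (S.box i a) = topInt (τ i) (boolHat a)) ∧
      (∀ a : A, boolHat (S.C a) = topInt (interTop τ) (boolHat a)) :=
  ⟨fun i => interiorTopology (S.box i),
    fun a i => boolHat_apply_eq_topInt (hS.isInteriorOperator_box i) a,
    S4CStruct.boolHat_C_eq_topInt hS hstd⟩
end

section
/- For an interior algebra A, the topology τ on Ult(A) generated by the sets {(□b)^ : b ∈ A} satisfies (□a)^ = Int_τ(â) for every a ∈ A, where â = {u ∈ Ult(A) : a ∈ u}. -/
/-- Every nonzero element of a Boolean algebra lies in some ultrafilter. -/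
lemma exists_boolUlt_mem {A : Type*} [BooleanAlgebra A] (x : A) (hx : x ≠ ⊥) :
    ∃ u : BoolUlt A, x ∈ u.carrier := by
  classical
  set F : Order.PFilter A := Order.PFilter.principal x
  set I : Order.Ideal A := Order.Ideal.principal ⊥
  have hdisj : Disjoint (F : Set A) (I : Set A) := by
    rw [Set.disjoint_left]
    intro y hyF hyI
    have h1 : x ≤ y := Order.PFilter.mem_principal.mp hyF
    have h2 : y ≤ ⊥ := Order.Ideal.mem_principal.mp hyI
    exact hx (le_bot_iff.mp (h1.trans h2))
  obtain ⟨J, hJprime, _, hJdisj⟩ :=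
    DistribLattice.prime_ideal_of_disjoint_filter_ideal hdisj
  have hxJ : x ∉ (J : Set A) := by
    intro h
    exact (Set.disjoint_left.mp hJdisj (Order.PFilter.mem_principal.mpr le_rfl)) h
  have htopJ : (⊤ : A) ∉ (J : Set A) := by
    intro h
    exact hxJ (J.lower le_top h)
  refine ⟨⟨(J : Set A)ᶜ, htopJ, by simp [Order.Ideal.bot_mem], ?_, ?_, ?_⟩, hxJ⟩
  · intro a b ha hb hab
    rcases hJprime.mem_or_mem hab with h | h
    · exact ha h
    · exact hb h
  · intro a b hab ha hb
    exact ha (J.lower hab hb)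
  · intro a
    by_contra h
    push_neg at h
    obtain ⟨ha, hac⟩ := h
    simp only [Set.mem_compl_iff, not_not] at ha hac
    have : a ⊔ aᶜ ∈ J := J.sup_mem ha hac
    rw [sup_compl_eq_top] at this
    exact htopJ this

theorem interior_algebra_representation {A : Type*} [BooleanAlgebra A]
    (box : A → A) (htop : box ⊤ = ⊤) (hinf : ∀ a b, box (a ⊓ b) = box a ⊓ box b)
    (hidem : ∀ a, box (box a) = box a) (hle : ∀ a, box a ≤ a) :
    ∀ a : A, boolHat (box a) =
      topInt (TopologicalSpace.generateFrom {s | ∃ b, s = boolHat (box b)}) (boolHat a) := by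
  intro a
  set S : Set (Set (BoolUlt A)) := {s | ∃ b, s = boolHat (box b)}
  set t := TopologicalSpace.generateFrom S with ht
  have hhat_inf : ∀ x y : A, boolHat (x ⊓ y) = boolHat x ∩ boolHat y := by
    intro x y
    ext u
    constructor
    · intro h
      exact ⟨u.mem_of_le _ _ inf_le_left h, u.mem_of_le _ _ inf_le_right h⟩
    · intro ⟨h1, h2⟩
      exact u.inf_mem _ _ h1 h2
  have hmono : ∀ x y : A, x ≤ y → box x ≤ box y := by
    intro x y hxy
    have : x ⊓ y = x := inf_eq_left.mpr hxy
    calc box x = box (x ⊓ y) := by rw [this]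
    _ = box x ⊓ box y := hinf x y
    _ ≤ box y := inf_le_right
  -- every t-open set is a union of basic sets
  have hbasis : ∀ U : Set (BoolUlt A), TopologicalSpace.GenerateOpen S U →
      ∀ u ∈ U, ∃ b, u ∈ boolHat (box b) ∧ boolHat (box b) ⊆ U := by
    intro U hU
    induction hU with
    | basic s hs =>
      obtain ⟨b, rfl⟩ := hs
      exact fun u hu => ⟨b, hu, subset_rfl⟩
    | univ =>
      intro u _
      refine ⟨⊤, ?_, Set.subset_univ _⟩
      rw [htop]
      exact u.top_mem
    | inter s₁ s₂ _ _ ih1 ih2 =>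
      intro u hu
      obtain ⟨b, hub, hbs⟩ := ih1 u hu.1
      obtain ⟨c, huc, hcs⟩ := ih2 u hu.2
      refine ⟨b ⊓ c, ?_, ?_⟩
      · show box (b ⊓ c) ∈ u.carrier
        rw [hinf]
        exact u.inf_mem _ _ hub huc
      · intro v hv
        have hv' : v ∈ boolHat (box b) ∩ boolHat (box c) := by
          rw [← hhat_inf, ← hinf]; exact hv
        exact ⟨hbs hv'.1, hcs hv'.2⟩
    | sUnion 𝒮 _ ih =>
      intro u hu
      obtain ⟨s, hs, hus⟩ := hu
      obtain ⟨b, hub, hbs⟩ := ih s hs u hus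
      exact ⟨b, hub, hbs.trans (Set.subset_sUnion_of_mem hs)⟩
  apply Set.Subset.antisymm
  · -- boolHat (box a) is open and contained in boolHat a
    have hopen : t.IsOpen (boolHat (box a)) :=
      TopologicalSpace.GenerateOpen.basic _ ⟨a, rfl⟩
    have hsub : boolHat (box a) ⊆ boolHat a := fun u hu => u.mem_of_le _ _ (hle a) hu
    letI := t
    exact interior_maximal hsub hopen
  · intro u hu
    letI := t
    have hIntOpen : t.IsOpen (topInt t (boolHat a)) := isOpen_interior
    have hIntSub : topInt t (boolHat a) ⊆ boolHat a := interior_subset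
    obtain ⟨b, hub, hbs⟩ := hbasis _ hIntOpen u hu
    have hsub : boolHat (box b) ⊆ boolHat a := hbs.trans hIntSub
    -- show box b ≤ a
    have hba : box b ≤ a := by
      by_contra hcon
      have hne : box b ⊓ aᶜ ≠ ⊥ := by
        intro h
        exact hcon (sdiff_eq_bot_iff.mp (by rw [sdiff_eq]; exact h))
      obtain ⟨v, hv⟩ := exists_boolUlt_mem _ hne
      have h1 : box b ∈ v.carrier := v.mem_of_le _ _ inf_le_left hv
      have h2 : aᶜ ∈ v.carrier := v.mem_of_le _ _ inf_le_right hv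
      have h3 : a ∈ v.carrier := hsub h1
      have h4 : a ⊓ aᶜ ∈ v.carrier := v.inf_mem _ _ h3 h2
      rw [inf_compl_eq_bot] at h4
      exact v.bot_not_mem h4
    have : box b ≤ box a := by
      calc box b = box (box b) := (hidem b).symm
      _ ≤ box a := hmono _ _ hba
    exact u.mem_of_le _ _ this hub
end

section
/- An S4^C_I-algebra is embeddable into a complete S4^C_I-algebra if and only if it is standard. -/
universe u

/-!
In every `S4^C_I`-algebra the induction axiom makes `C d` the greatest post-fixpoint of
`z ↦ E d ⊓ E z`. In a complete algebra the join of a sequence as in the definition of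
standardness is such a post-fixpoint, so complete algebras are standard, and standardness
is inherited by subalgebras.

Conversely, embed `A` into the powerset of its prime ideals by the Stone map `st`, extend each
`□_i` by `□_i U = ⋃ {st (□_i c) | st c ⊆ U}` and let `C U` be the greatest post-fixpoint of
`z ↦ E (U ⊓ z)`. By compactness of the Stone space, a post-fixpoint `z` of `z ↦ E (st a ⊓ z)` is
covered by the images of elements `c` with `st c ⊆ st a ⊓ z`, and each such `c` satisfies
`c ≤ E a ⊓ E c'` for another such `c'`; standardness puts all of them, hence `z`, below `st (C a)`.
-/

namespace S4CStruct

section Basic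

variable {I B : Type*} [Fintype I] [BooleanAlgebra B] {T : S4CStruct I B}

theorem box_mono (hinf : ∀ i a b, T.box i (a ⊓ b) = T.box i a ⊓ T.box i b) (i : I) :
    Monotone (T.box i) := fun a b h => by
  rw [← inf_eq_left.2 h, hinf]
  exact inf_le_right

theorem E_mono_s14 (hinf : ∀ i a b, T.box i (a ⊓ b) = T.box i a ⊓ T.box i b) : Monotone T.E :=
  fun _ _ h => Finset.inf_mono_fun fun i _ => box_mono hinf i h

theorem E_inf_s14 (hinf : ∀ i a b, T.box i (a ⊓ b) = T.box i a ⊓ T.box i b) (a b : B) :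
    T.E (a ⊓ b) = T.E a ⊓ T.E b := by
  simp only [E, hinf]
  exact Finset.inf_inf

theorem E_top (htop : ∀ i, T.box i ⊤ = ⊤) : T.E ⊤ = ⊤ := by
  simp [E, htop]

theorem E_le_s14 [Nonempty I] (hle : ∀ i a, T.box i a ≤ a) (a : B) : T.E a ≤ a :=
  (Finset.inf_le (Finset.mem_univ (Classical.arbitrary I))).trans (hle _ a)

theorem IsS4C.C_mono (hT : T.IsS4C) : Monotone T.C := fun a b h => by
  rw [← inf_eq_left.2 h, hT.C_inf]
  exact inf_le_right

theorem IsS4C.le_C_of_le_E (hT : T.IsS4C) {d z : B} (h : z ≤ T.E d ⊓ T.E z) : z ≤ T.C d := by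
  have hz : z ≤ T.E (d ⊓ z) := by rwa [E_inf_s14 hT.box_inf]
  have hdz : T.E (d ⊓ z) ≤ T.C (d ⊓ z) := by
    have := hT.ind (d ⊓ z)
    rwa [himp_eq_top_iff.2 (inf_le_right.trans hz), hT.C_top, inf_top_eq] at this
  exact hz.trans (hdz.trans (hT.C_mono inf_le_left))

theorem IsS4C.C_le_E_inf (hT : T.IsS4C) (a : B) : T.C a ≤ T.E (a ⊓ T.C a) := by
  rw [E_inf_s14 hT.box_inf]
  exact hT.fix a

theorem IsS4C.standard_of_isLUB (hT : T.IsS4C) (hlub : ∀ s : Set B, ∃ b, IsLUB s b) :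
    T.Standard := by
  intro d a ha
  obtain ⟨b, hb⟩ := hlub (Set.range a)
  have hpost : b ≤ T.E d ⊓ T.E b := hb.2 <| Set.forall_mem_range.2 fun j =>
    (ha j).trans (inf_le_inf_left _ (E_mono_s14 hT.box_inf (hb.1 ⟨j + 1, rfl⟩)))
  exact (hb.1 ⟨0, rfl⟩).trans (hT.le_C_of_le_E hpost)

theorem Standard.le_C_of_forall_exists_s14 (hT : T.Standard) {d : B} {G : Set B}
    (hG : ∀ c ∈ G, ∃ c' ∈ G, c ≤ T.E d ⊓ T.E c') {c : B} (hc : c ∈ G) : c ≤ T.C d := by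
  choose next hnext hle using hG
  let seq : ℕ → G := fun n => Nat.rec ⟨c, hc⟩ (fun _ q => ⟨next q q.2, hnext q q.2⟩) n
  exact hT d (fun n => (seq n).1) fun n => hle _ (seq n).2

end Basic

theorem Standard.of_embedding {I A B : Type*} [Fintype I] [BooleanAlgebra A] [BooleanAlgebra B]
    {S : S4CStruct I A} {T : S4CStruct I B} (hT : T.Standard) (f : InfTopHom A B)
    (hinj : Function.Injective f) (hbox : ∀ i a, f (S.box i a) = T.box i (f a))
    (hC : ∀ a, f (S.C a) = T.C (f a)) : S.Standard := by
  have hE : ∀ a, f (S.E a) = T.E (f a) := fun a => by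
    simp only [E, map_finset_inf, Function.comp_def, hbox]
  intro d a ha
  have hle : f (a 0) ≤ f (S.C d) := by
    rw [hC]
    refine hT (f d) (fun n => f (a n)) fun j => ?_
    rw [← hE, ← hE, ← map_inf]
    exact OrderHomClass.mono f (ha j)
  rw [← inf_eq_left, ← map_inf] at hle
  exact inf_eq_left.1 (hinj hle)

section OfBoxes

variable {I B : Type*} [Fintype I] [CompleteBooleanAlgebra B]

def ofBoxes (box : I → B → B) : S4CStruct I B where
  box := box
  C a := sSup {z | z ≤ Finset.univ.inf fun i => box i (a ⊓ z)}

variable {box : I → B → B}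

theorem le_ofBoxes_C {a z : B} (h : z ≤ (ofBoxes box).E (a ⊓ z)) : z ≤ (ofBoxes box).C a :=
  le_sSup h

theorem ofBoxes_C_le_E (hinf : ∀ i a b, box i (a ⊓ b) = box i a ⊓ box i b) (a : B) :
    (ofBoxes box).C a ≤ (ofBoxes box).E (a ⊓ (ofBoxes box).C a) :=
  sSup_le fun _ hz => hz.trans (E_mono_s14 (T := ofBoxes box) hinf (inf_le_inf_left a (le_sSup hz)))

theorem isS4C_ofBoxes [Nonempty I] (htop : ∀ i, box i ⊤ = ⊤)
    (hinf : ∀ i a b, box i (a ⊓ b) = box i a ⊓ box i b) (hidem : ∀ i a, box i (box i a) = box i a)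
    (hle : ∀ i a, box i a ≤ a) : (ofBoxes box).IsS4C := by
  set T := ofBoxes box
  have hpost := ofBoxes_C_le_E hinf
  have hC_mono : Monotone T.C := fun a b h =>
    le_ofBoxes_C ((hpost a).trans (E_mono_s14 hinf (inf_le_inf_right _ h)))
  have hC_le : ∀ a, T.C a ≤ a := fun a => ((hpost a).trans (E_le_s14 hle _)).trans inf_le_left
  refine ⟨htop, hinf, hidem, hle, ?_, fun a b => ?_, fun a => ?_, hC_le, fun a => ?_, fun a => ?_⟩
  · exact top_unique (le_ofBoxes_C (by rw [top_inf_eq, E_top htop]))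
  · refine le_antisymm (le_inf (hC_mono inf_le_left) (hC_mono inf_le_right)) (le_ofBoxes_C ?_)
    calc T.C a ⊓ T.C b ≤ T.E (a ⊓ T.C a) ⊓ T.E (b ⊓ T.C b) := inf_le_inf (hpost a) (hpost b)
      _ = T.E (a ⊓ b ⊓ (T.C a ⊓ T.C b)) := by rw [← E_inf_s14 hinf, inf_inf_inf_comm]
  · refine le_antisymm (hC_le _) (le_ofBoxes_C ((hpost a).trans (E_mono_s14 hinf ?_)))
    exact le_inf inf_le_right inf_le_right
  · rw [← E_inf_s14 hinf]
    exact hpost a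
  · refine le_ofBoxes_C ?_
    calc T.E a ⊓ T.C (a ⇨ T.E a)
        ≤ T.E a ⊓ T.E ((a ⇨ T.E a) ⊓ T.C (a ⇨ T.E a)) := inf_le_inf_left _ (hpost _)
      _ = T.E (a ⊓ (T.E a ⊓ T.C (a ⇨ T.E a))) := by
        rw [← E_inf_s14 hinf, ← inf_assoc, inf_himp, inf_assoc]

end OfBoxes

end S4CStruct

section Stone

variable {A : Type*} [BooleanAlgebra A]

def PrimeIdeal (A : Type*) [BooleanAlgebra A] : Type _ := {J : Order.Ideal A // J.IsPrime}

def stone : BoundedLatticeHom A (Set (PrimeIdeal A)) where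
  toFun a := {J | a ∉ J.1}
  map_sup' a b := by
    ext J
    simp [Order.Ideal.sup_mem_iff, imp_iff_not_or]
  map_inf' a b := by
    ext J
    change _ ∉ J.1 ↔ _ ∉ J.1 ∧ _ ∉ J.1
    rw [← not_or]
    exact not_congr ⟨J.2.mem_or_mem, fun h => h.elim (J.1.lower inf_le_left)
      (J.1.lower inf_le_right)⟩
  map_top' := Set.eq_univ_of_forall fun J => J.2.top_notMem
  map_bot' := Set.eq_empty_of_forall_notMem fun J h => h J.1.bot_mem

theorem exists_le_of_stone_subset_iUnion {c : A} {D : Set A} (hD : DirectedOn (· ≤ ·) D)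
    (hne : D.Nonempty) (hcov : stone c ⊆ ⋃ d ∈ D, stone d) : ∃ d ∈ D, c ≤ d := by
  by_contra! hc
  have hI : Order.IsIdeal {x | ∃ d ∈ D, x ≤ d} := by
    refine ⟨fun x y hyx ⟨d, hd, hxd⟩ => ⟨d, hd, hyx.trans hxd⟩, hne.mono fun d hd => ⟨d, hd, le_rfl⟩,
      fun x ⟨d₁, hd₁, hx⟩ y ⟨d₂, hd₂, hy⟩ => ?_⟩
    obtain ⟨d, hd, h₁, h₂⟩ := hD d₁ hd₁ d₂ hd₂
    exact ⟨d, ⟨d, hd, le_rfl⟩, hx.trans h₁, hy.trans h₂⟩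
  have hdisj : Disjoint (Order.PFilter.principal c : Set A) hI.toIdeal :=
    Set.disjoint_left.2 fun x hcx ⟨d, hd, hxd⟩ => hc d hd (hcx.trans hxd)
  obtain ⟨J, hJ, hIJ, hJc⟩ := DistribLattice.prime_ideal_of_disjoint_filter_ideal hdisj
  obtain ⟨d, hd, hdJ⟩ := Set.mem_iUnion₂.1 <| hcov (show (⟨J, hJ⟩ : PrimeIdeal A) ∈ stone c from
    Set.disjoint_left.1 hJc (Order.PFilter.mem_principal.2 le_rfl))
  exact hdJ (hIJ ⟨d, hd, le_rfl⟩)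

theorem stone_le_stone_iff {a b : A} : stone a ≤ stone b ↔ a ≤ b := by
  refine ⟨fun h => ?_, fun h => OrderHomClass.mono stone h⟩
  obtain ⟨d, rfl, hd⟩ := exists_le_of_stone_subset_iUnion (directedOn_singleton b)
    (Set.singleton_nonempty b) (by simpa using h)
  exact hd

theorem stone_injective : Function.Injective (stone (A := A)) := fun _ _ h =>
  le_antisymm (stone_le_stone_iff.1 h.le) (stone_le_stone_iff.1 h.ge)

end Stone

namespace S4CStruct

section Completion

variable {I A : Type*} [Fintype I] [BooleanAlgebra A] {S : S4CStruct I A}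

/-- The lower extension of `□_i` to sets of prime ideals. -/
def boxExt (S : S4CStruct I A) (i : I) (U : Set (PrimeIdeal A)) : Set (PrimeIdeal A) :=
  ⋃ (c : A) (_ : stone c ⊆ U), stone (S.box i c)

theorem mem_boxExt {i : I} {U : Set (PrimeIdeal A)} {J : PrimeIdeal A} :
    J ∈ boxExt S i U ↔ ∃ c, stone c ⊆ U ∧ J ∈ stone (S.box i c) := by
  simp [boxExt]

theorem stone_box_subset_boxExt {i : I} {U : Set (PrimeIdeal A)} {c : A} (h : stone c ⊆ U) :
    stone (S.box i c) ⊆ boxExt S i U :=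
  fun _ hJ => mem_boxExt.2 ⟨c, h, hJ⟩

theorem boxExt_stone (hS : S.IsS4C) (i : I) (a : A) :
    boxExt S i (stone a) = stone (S.box i a) := by
  refine le_antisymm (Set.iUnion₂_subset fun c hc => ?_) (stone_box_subset_boxExt le_rfl)
  exact stone_le_stone_iff.2 (box_mono hS.box_inf i (stone_le_stone_iff.1 hc))

theorem boxExt_le (hS : S.IsS4C) (i : I) (U : Set (PrimeIdeal A)) : boxExt S i U ≤ U :=
  Set.iUnion₂_subset fun _ hc => (OrderHomClass.mono stone (hS.box_le i _)).trans hc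

theorem boxExt_inf (hS : S.IsS4C) (i : I) (U V : Set (PrimeIdeal A)) :
    boxExt S i (U ⊓ V) = boxExt S i U ⊓ boxExt S i V := by
  refine le_antisymm (le_inf ?_ ?_) ?_
  · exact Set.iUnion₂_subset fun c hc => stone_box_subset_boxExt (hc.trans inf_le_left)
  · exact Set.iUnion₂_subset fun c hc => stone_box_subset_boxExt (hc.trans inf_le_right)
  · rintro J ⟨hU, hV⟩
    obtain ⟨c, hcU, hJc⟩ := mem_boxExt.1 hU
    obtain ⟨d, hdV, hJd⟩ := mem_boxExt.1 hV
    refine mem_boxExt.2 ⟨c ⊓ d, ?_, ?_⟩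
    · rw [map_inf]
      exact inf_le_inf hcU hdV
    · rw [hS.box_inf, map_inf]
      exact ⟨hJc, hJd⟩

theorem boxExt_top (hS : S.IsS4C) (i : I) : boxExt S i ⊤ = ⊤ :=
  top_unique <| by
    simpa [hS.box_top] using stone_box_subset_boxExt (S := S) (i := i) (Set.subset_univ (stone ⊤))

theorem boxExt_idem (hS : S.IsS4C) (i : I) (U : Set (PrimeIdeal A)) :
    boxExt S i (boxExt S i U) = boxExt S i U := by
  refine (boxExt_le hS i _).antisymm (Set.iUnion₂_subset fun c hc => ?_)
  rw [← hS.box_idem]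
  exact stone_box_subset_boxExt (stone_box_subset_boxExt hc)

/-- A complete `S4^C_I`-algebra into which `stone` embeds `S` whenever `S` is standard. -/
def completion (S : S4CStruct I A) : S4CStruct I (Set (PrimeIdeal A)) := ofBoxes (boxExt S)

theorem isS4C_completion [Nonempty I] (hS : S.IsS4C) : (completion S).IsS4C :=
  isS4C_ofBoxes (boxExt_top hS) (boxExt_inf hS) (boxExt_idem hS) (boxExt_le hS)

theorem completion_E_stone (hS : S.IsS4C) (a : A) : (completion S).E (stone a) = stone (S.E a) := by
  simp only [E, map_finset_inf, Function.comp_def, completion, ofBoxes, boxExt_stone hS]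

theorem mem_completion_E {V : Set (PrimeIdeal A)} {J : PrimeIdeal A} :
    J ∈ (completion S).E V ↔ ∀ i, J ∈ boxExt S i V := by
  simp [E, completion, ofBoxes, Finset.inf_eq_iInf]

theorem mem_stone_E {c : A} {J : PrimeIdeal A} :
    J ∈ stone (S.E c) ↔ ∀ i, J ∈ stone (S.box i c) := by
  simp [E, map_finset_inf, Finset.inf_eq_iInf]

theorem exists_stone_subset_of_mem_E (hS : S.IsS4C) {V : Set (PrimeIdeal A)} {J : PrimeIdeal A}
    (hJ : J ∈ (completion S).E V) : ∃ c, stone c ⊆ V ∧ J ∈ stone (S.E c) := by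
  choose c hcV hJc using fun i => mem_boxExt.1 (mem_completion_E.1 hJ i)
  refine ⟨Finset.univ.sup c, ?_, mem_stone_E.2 fun i => ?_⟩
  · rw [map_finset_sup]
    exact Finset.sup_le fun i _ => hcV i
  · exact OrderHomClass.mono stone
      (box_mono hS.box_inf i (Finset.le_sup (Finset.mem_univ i))) (hJc i)

theorem exists_le_E_of_stone_subset_E (hS : S.IsS4C) {V : Set (PrimeIdeal A)} {c : A}
    (h : stone c ⊆ (completion S).E V) : ∃ d, stone d ⊆ V ∧ c ≤ S.E d := by
  have hdir : DirectedOn (· ≤ ·) (S.E '' {d | stone d ⊆ V}) := by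
    rintro _ ⟨d₁, hd₁, rfl⟩ _ ⟨d₂, hd₂, rfl⟩
    refine ⟨S.E (d₁ ⊔ d₂), ⟨d₁ ⊔ d₂, ?_, rfl⟩, E_mono_s14 hS.box_inf le_sup_left,
      E_mono_s14 hS.box_inf le_sup_right⟩
    rw [Set.mem_ofPred_eq, map_sup]
    exact sup_le hd₁ hd₂
  have hcov : stone c ⊆ ⋃ e ∈ S.E '' {d | stone d ⊆ V}, stone e := fun J hJ => by
    obtain ⟨d, hdV, hJd⟩ := exists_stone_subset_of_mem_E hS (h hJ)
    exact Set.mem_biUnion ⟨d, hdV, rfl⟩ hJd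
  obtain ⟨_, ⟨d, hdV, rfl⟩, hcd⟩ := exists_le_of_stone_subset_iUnion hdir
    ⟨_, ⊥, by simp, rfl⟩ hcov
  exact ⟨d, hdV, hcd⟩

theorem le_stone_C_of_le_E [Nonempty I] (hS : S.IsS4C) (hstd : S.Standard) {a : A}
    {z : Set (PrimeIdeal A)} (hz : z ≤ (completion S).E (stone a ⊓ z)) : z ≤ stone (S.C a) := by
  have hG : ∀ c ∈ {c | stone c ⊆ stone a ⊓ z}, ∃ c' ∈ {c | stone c ⊆ stone a ⊓ z},
      c ≤ S.E a ⊓ S.E c' := by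
    intro c hc
    obtain ⟨c', hc', hcc'⟩ := exists_le_E_of_stone_subset_E hS ((hc.trans inf_le_right).trans hz)
    have hc'a : c' ≤ a := stone_le_stone_iff.1 (hc'.trans inf_le_left)
    exact ⟨c', hc', le_inf (hcc'.trans (E_mono_s14 hS.box_inf hc'a)) hcc'⟩
  intro J hJ
  obtain ⟨c, hc, hJc⟩ := exists_stone_subset_of_mem_E hS (hz hJ)
  exact stone_le_stone_iff.2 ((E_le_s14 hS.box_le c).trans (hstd.le_C_of_forall_exists_s14 hG hc)) hJc

theorem completion_C_stone [Nonempty I] (hS : S.IsS4C) (hstd : S.Standard) (a : A) :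
    (completion S).C (stone a) = stone (S.C a) := by
  refine le_antisymm (sSup_le fun z hz => le_stone_C_of_le_E hS hstd hz) (le_ofBoxes_C ?_)
  change stone (S.C a) ≤ (completion S).E (stone a ⊓ stone (S.C a))
  rw [← map_inf, completion_E_stone hS]
  exact stone_le_stone_iff.2 (hS.C_le_E_inf a)

end Completion

end S4CStruct

theorem embeddable_iff_standard {I : Type*} {A : Type u} [Fintype I] [Nonempty I]
    [BooleanAlgebra A] (S : S4CStruct I A) (hS : S.IsS4C) :
    (∃ (B : Type u) (_ : BooleanAlgebra B) (T : S4CStruct I B),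
      T.IsS4C ∧ (∀ s : Set B, ∃ b : B, IsLUB s b) ∧
      ∃ f : A → B, Function.Injective f ∧
        (∀ a b : A, f (a ⊓ b) = f a ⊓ f b) ∧
        (∀ a b : A, f (a ⊔ b) = f a ⊔ f b) ∧
        (∀ a : A, f aᶜ = (f a)ᶜ) ∧ f ⊥ = ⊥ ∧ f ⊤ = ⊤ ∧
        (∀ (i : I) (a : A), f (S.box i a) = T.box i (f a)) ∧
        (∀ a : A, f (S.C a) = T.C (f a))) ↔ S.Standard := by
  constructor
  · rintro ⟨B, _, T, hT, hlub, f, hinj, hinf, -, -, -, htop, hbox, hC⟩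
    exact (hT.standard_of_isLUB hlub).of_embedding ⟨⟨f, hinf⟩, htop⟩ hinj hbox hC
  · intro hstd
    exact ⟨_, inferInstance, S.completion, S4CStruct.isS4C_completion hS,
      fun s => ⟨sSup s, isLUB_sSup s⟩, stone, stone_injective, map_inf stone, map_sup stone,
      map_compl' stone, map_bot stone, map_top stone,
      fun i a => (S4CStruct.boxExt_stone hS i a).symm,
      fun a => (S4CStruct.completion_C_stone hS hstd a).symm⟩
end

section
/- In the powerset S4^C_I-algebra of a set X (with operators □_i arising from topologies τ_i and C), the set C(Y) is τ-open for τ = ⋂_{i∈I} τ_i and C(Y) ⊆ Int_τ(Y) for every Y ⊆ X. -/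
theorem C_open_and_le_int {I X : Type*} [Fintype I] [Nonempty I]
    (τ : I → TopologicalSpace X) (S : S4CStruct I (Set X))
    (hbox : ∀ i, S.box i = topInt (τ i)) (hS : S.IsS4C) :
    ∀ Y : Set X, (interTop τ).IsOpen (S.C Y) ∧ S.C Y ⊆ topInt (interTop τ) Y := by
  intro Y
  have hEle : ∀ (a : Set X) i, S.E a ≤ S.box i a := fun a i =>
    Finset.inf_le (Finset.mem_univ i)
  have hopen : ∀ i, (τ i).IsOpen (S.C Y) := by
    intro i
    have h1 : S.C Y ≤ S.box i (S.C Y) :=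
      le_trans (le_trans (hS.fix Y) inf_le_right) (hEle _ i)
    have h2 : S.box i (S.C Y) ≤ S.C Y := hS.box_le i _
    letI := τ i
    have heq : S.C Y = interior (S.C Y) := by
      have := hbox i
      rw [this] at h1 h2
      exact le_antisymm h1 h2
    rw [heq]; exact isOpen_interior
  have hsub : S.C Y ⊆ Y := hS.C_le Y
  refine ⟨hopen, ?_⟩
  letI := interTop τ
  exact interior_maximal hsub hopen
end
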